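/- arXiv:1802.00952 — 4 statements merged into one kernel-verified Lean document; each statement's English description precedes it below -/
import Mathlib

section
/- For every polynomial p in two non-commuting variables with complex coefficients, there exists a finite constant C depending only on p such that for all N and all N×N complex matrices A, A', B, the rank of p(A,B) − p(A',B) is at most C times the rank of A − A'. -/
/-- Evaluation of a non-commutative polynomial in two variables (an element of the
free algebra `FreeAlgebra ℂ (Fin 2)`) at a pair of square matrices. -/
noncomputable def ncEval {N : ℕ} (p : FreeAlgebra ℂ (Fin 2))
    (A B : Matrix (Fin N) (Fin N) ℂ) : Matrix (Fin N) (Fin N) ℂ :=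
  FreeAlgebra.lift ℂ (![A, B]) p

lemma matrix_rank_add_le {N : ℕ} (A B : Matrix (Fin N) (Fin N) ℂ) :
    (A + B).rank ≤ A.rank + B.rank := by
  simp only [Matrix.rank]
  have h : LinearMap.range (A + B).mulVecLin ≤
      LinearMap.range A.mulVecLin ⊔ LinearMap.range B.mulVecLin := by
    rintro x ⟨v, rfl⟩
    rw [Matrix.mulVecLin_add, LinearMap.add_apply]
    exact Submodule.add_mem_sup (LinearMap.mem_range_self _ v) (LinearMap.mem_range_self _ v)
  calc Module.finrank ℂ (LinearMap.range (A + B).mulVecLin)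
      ≤ Module.finrank ℂ ↥(LinearMap.range A.mulVecLin ⊔ LinearMap.range B.mulVecLin) :=
        Submodule.finrank_mono h
    _ ≤ _ := Submodule.finrank_add_le_finrank_add_finrank _ _

/-- For every non-commutative polynomial `p` in two variables with complex coefficients,
there is a finite constant `C` depending only on `p` such that
`rank (p(A,B) - p(A',B)) ≤ C * rank (A - A')` for all square matrices `A, A', B`. -/
theorem rank_ncEval_sub_le (p : FreeAlgebra ℂ (Fin 2)) :
    ∃ C : ℕ, ∀ (N : ℕ) (A A' B : Matrix (Fin N) (Fin N) ℂ),
      (ncEval p A B - ncEval p A' B).rank ≤ C * (A - A').rank := by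
  induction p with
  | grade0 r =>
    refine ⟨0, fun N A A' B => ?_⟩
    have : ncEval (algebraMap ℂ _ r) A B = ncEval (algebraMap ℂ _ r) A' B := by
      simp [ncEval]
    simp [this]
  | grade1 x =>
    refine ⟨1, fun N A A' B => ?_⟩
    fin_cases x
    · simp [ncEval]
    · simp [ncEval]
  | mul a b ha hb =>
    obtain ⟨Ca, ha⟩ := ha
    obtain ⟨Cb, hb⟩ := hb
    refine ⟨Ca + Cb, fun N A A' B => ?_⟩
    have key : ncEval (a * b) A B - ncEval (a * b) A' B =
        (ncEval a A B - ncEval a A' B) * ncEval b A B +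
        ncEval a A' B * (ncEval b A B - ncEval b A' B) := by
      simp only [ncEval, map_mul]
      noncomm_ring
    rw [key]
    calc ((ncEval a A B - ncEval a A' B) * ncEval b A B +
        ncEval a A' B * (ncEval b A B - ncEval b A' B)).rank
        ≤ ((ncEval a A B - ncEval a A' B) * ncEval b A B).rank +
          (ncEval a A' B * (ncEval b A B - ncEval b A' B)).rank := matrix_rank_add_le _ _
      _ ≤ (ncEval a A B - ncEval a A' B).rank + (ncEval b A B - ncEval b A' B).rank :=
          add_le_add (Matrix.rank_mul_le_left _ _) (Matrix.rank_mul_le_right _ _)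
      _ ≤ Ca * (A - A').rank + Cb * (A - A').rank := add_le_add (ha N A A' B) (hb N A A' B)
      _ = (Ca + Cb) * (A - A').rank := by ring
  | add a b ha hb =>
    obtain ⟨Ca, ha⟩ := ha
    obtain ⟨Cb, hb⟩ := hb
    refine ⟨Ca + Cb, fun N A A' B => ?_⟩
    have key : ncEval (a + b) A B - ncEval (a + b) A' B =
        (ncEval a A B - ncEval a A' B) + (ncEval b A B - ncEval b A' B) := by
      simp only [ncEval, map_add]; abel
    rw [key]
    calc _ ≤ (ncEval a A B - ncEval a A' B).rank + (ncEval b A B - ncEval b A' B).rank :=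
          matrix_rank_add_le _ _
      _ ≤ Ca * (A - A').rank + Cb * (A - A').rank := add_le_add (ha N A A' B) (hb N A A' B)
      _ = (Ca + Cb) * (A - A').rank := by ring
end

section
/- For every n ≥ 1 and every pair of permutations α, β in the symmetric group S_n, #α + #(α⁻¹β) + #(β⁻¹γ) ≤ 2n + 1, where γ is the full cycle (1,2,…,n) and #σ denotes the number of cycles of the permutation σ. -/
/-!
Write `|σ| = n - #σ` for the length of `σ ∈ S_n` in the generating set of all transpositions.
Composing with the transposition `(x f(x))` splits `x` off its cycle, and composing with an
arbitrary transposition changes the number of cycles by at most one, so `|·|` is subadditive.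
Since `α · α⁻¹β · β⁻¹γ = γ` and `|γ| = n - 1`, the three lengths add up to at least `n - 1`,
i.e. the three cycle counts add up to at most `3n - (n - 1) = 2n + 1`.
-/

/-- The number of cycles of a permutation, counting fixed points as cycles of
length one. -/
def numCycles {n : ℕ} (σ : Equiv.Perm (Fin n)) : ℕ :=
  σ.cycleType.card + (Finset.univ.filter fun x => σ x = x).card

open Finset

namespace Equiv.Perm

variable {α : Type*} [Fintype α] [DecidableEq α]

/-- `card α` minus the number of cycles of `f`: a `k`-cycle is a product of `k - 1` swaps. -/
def swapLength (f : Perm α) : ℕ :=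
  (f.cycleType.map (· - 1)).sum

@[simp]
theorem swapLength_one : swapLength (1 : Perm α) = 0 := by
  simp [swapLength]

theorem swapLength_add_card_cycleType (f : Perm α) :
    f.swapLength + Multiset.card f.cycleType = #f.support := by
  rw [← sum_cycleType, swapLength]
  calc (f.cycleType.map (· - 1)).sum + Multiset.card f.cycleType
      = (f.cycleType.map fun k => k - 1 + 1).sum := by simp [Multiset.sum_map_add]
    _ = f.cycleType.sum := by
      rw [Multiset.map_congr rfl fun k hk => Nat.sub_add_cancel (one_lt_of_mem_cycleType hk).le,
        Multiset.map_id']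

theorem Disjoint.swapLength_mul {f g : Perm α} (h : f.Disjoint g) :
    (f * g).swapLength = f.swapLength + g.swapLength := by
  simp only [swapLength, h.cycleType_mul, Multiset.map_add, Multiset.sum_add]

theorem IsCycle.swapLength_add_one {c : Perm α} (hc : c.IsCycle) :
    c.swapLength + 1 = #c.support := by
  simp [swapLength, hc.cycleType, Nat.sub_add_cancel (one_lt_card_support_of_ne_one hc.ne_one).le]

theorem IsCycle.swapLength_swap_mul_add_one {c : Perm α} (hc : c.IsCycle) {x : α} (hx : c x ≠ x) :
    (swap x (c x) * c).swapLength + 1 = c.swapLength := by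
  by_cases hcc : c (c x) = x
  · have hswap : c = swap x (c x) := hc.eq_swap_of_apply_apply_eq_self hx hcc
    have h := hc.swapLength_add_one
    generalize c x = y at hswap hx h ⊢
    subst hswap
    rw [card_support_swap hx.symm] at h
    rw [swap_mul_self, swapLength_one]
    omega
  · have h := (hc.swap_mul hx hcc).swapLength_add_one
    have hsupp : #(swap x (c x) * c).support + 1 = #c.support := by
      rw [support_swap_mul_eq c x hcc, card_sdiff_of_subset (by simpa using hx), card_singleton,
        Nat.sub_add_cancel (card_pos.2 ⟨x, mem_support.2 hx⟩)]
    have := hc.swapLength_add_one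
    omega

theorem swapLength_swap_mul_add_one {f : Perm α} {x : α} (hx : f x ≠ x) :
    (swap x (f x) * f).swapLength + 1 = f.swapLength := by
  set c := f.cycleOf x
  have hc : c.IsCycle := isCycle_cycleOf f hx
  have hcx : c x = f x := cycleOf_apply_self f x
  have hd : (f * c⁻¹).Disjoint c := disjoint_mul_inv_of_mem_cycleFactorsFinset <|
    cycleOf_mem_cycleFactorsFinset_iff.2 (mem_support.2 hx)
  have hf : f = f * c⁻¹ * c := (inv_mul_cancel_right f c).symm
  have hswap : (swap x (c x)).support ≤ c.support := by
    rw [support_swap (hcx ▸ hx).symm, insert_subset_iff, singleton_subset_iff,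
      apply_mem_support, and_self, mem_support, hcx]
    exact hx
  have hsplit : swap x (f x) * f = f * c⁻¹ * (swap x (c x) * c) := by
    rw [← hcx]
    conv_lhs => rw [hf]
    rw [← mul_assoc, (hd.mono le_rfl hswap).commute.symm.eq, mul_assoc]
  have hd' : (f * c⁻¹).Disjoint (swap x (c x) * c) :=
    hd.mono le_rfl fun y hy => (mem_support_swap_mul_imp_mem_support_ne hy).1
  rw [hsplit, hd'.swapLength_mul]
  conv_rhs => rw [hf, hd.swapLength_mul, ← hc.swapLength_swap_mul_add_one (hcx ▸ hx)]
  omega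

theorem swapLength_swap_mul_le (f : Perm α) {c d : α} (hcd : c ≠ d) :
    (swap c d * f).swapLength ≤ f.swapLength + 1 := by
  induction hm : #f.support using Nat.strong_induction_on generalizing f with
  | _ m ih =>
  by_cases hfc : f c = c
  · have hc : (swap c d * f) c ≠ c := by simpa [hfc] using hcd.symm
    have h := swapLength_swap_mul_add_one hc
    rw [mul_apply, hfc, swap_apply_left, swap_mul_self_mul] at h
    omega
  by_cases hfd : f d = c
  · have h := swapLength_swap_mul_add_one (f := f) (x := d) (by rwa [hfd])
    rw [hfd, swap_comm] at h
    omega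
  -- With `y = f⁻¹ c` we have `swap c d * f = swap y d * (swap c d * (swap y c * f))`,
  -- where `y` is split off its cycle on both sides and induction applies to `swap y c * f`.
  set y := f⁻¹ c
  have hfy : f y = c := f.apply_symm_apply c
  have hyc : y ≠ c := fun h => hfc (h ▸ hfy)
  have hyd : y ≠ d := fun h => hfd (h ▸ hfy)
  have hsplit := swapLength_swap_mul_add_one (f := f) (x := y) (by rwa [hfy, ne_comm])
  rw [hfy] at hsplit
  have hlt : #(swap y c * f).support < m := hm ▸ hfy ▸ card_support_swap_mul (hfy ▸ hyc.symm)
  have hy : (swap c d * f) y ≠ y := by simpa [hfy] using hyd.symm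
  have h := swapLength_swap_mul_add_one hy
  have hconj : swap y d * swap c d = swap c d * swap y c := by
    rw [mul_swap_eq_swap_mul (swap c d) y c, swap_apply_of_ne_of_ne hyc hyd, swap_apply_left]
  rw [mul_apply, hfy, swap_apply_left, ← mul_assoc, hconj, mul_assoc] at h
  have := ih _ hlt (swap y c * f) rfl
  omega

theorem swapLength_mul_le (f g : Perm α) : (f * g).swapLength ≤ f.swapLength + g.swapLength := by
  induction hm : #f.support using Nat.strong_induction_on generalizing f with
  | _ m ih =>
  rcases eq_or_ne f 1 with rfl | hf
  · simp
  obtain ⟨x, hx⟩ : ∃ x, f x ≠ x := by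
    by_contra! h
    exact hf (Equiv.ext h)
  have hlt : #(swap x (f x) * f).support < m := hm ▸ card_support_swap_mul hx
  calc (f * g).swapLength = (swap x (f x) * (swap x (f x) * f * g)).swapLength := by
        rw [← mul_assoc, ← mul_assoc, swap_mul_self, one_mul]
    _ ≤ (swap x (f x) * f * g).swapLength + 1 := swapLength_swap_mul_le _ hx.symm
    _ ≤ (swap x (f x) * f).swapLength + g.swapLength + 1 := by
        have := ih _ hlt (swap x (f x) * f) rfl
        omega
    _ = f.swapLength + g.swapLength := by
        rw [← swapLength_swap_mul_add_one hx]
        ring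

end Equiv.Perm

open Equiv Perm

theorem numCycles_add_swapLength {n : ℕ} (σ : Perm (Fin n)) : numCycles σ + σ.swapLength = n := by
  have hfix : #(univ.filter fun x => σ x = x) + #σ.support = n := by
    simpa [Equiv.Perm.support] using
      card_filter_add_card_filter_not (s := (univ : Finset (Fin n))) (p := fun x => σ x = x)
  have := σ.swapLength_add_card_cycleType
  unfold numCycles
  omega

theorem numCycles_finRotate_le_one (n : ℕ) : numCycles (finRotate n) ≤ 1 := by
  match n with
  | 0 => simp [numCycles, Subsingleton.elim (finRotate 0) 1]
  | 1 => simp [numCycles, Subsingleton.elim (finRotate 1) 1]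
  | n + 2 =>
    have h := (isCycle_finRotate (n := n)).swapLength_add_one
    have := numCycles_add_swapLength (finRotate (n + 2))
    rw [support_finRotate, card_univ, Fintype.card_fin] at h
    omega

theorem numCycles_triple_le_general (n : ℕ) (α β : Equiv.Perm (Fin n)) :
    numCycles α + numCycles (α⁻¹ * β) + numCycles (β⁻¹ * finRotate n) ≤ 2 * n + 1 := by
  have hγ : α * (α⁻¹ * β) * (β⁻¹ * finRotate n) = finRotate n := by group
  have hsub : (finRotate n).swapLength ≤
      α.swapLength + (α⁻¹ * β).swapLength + (β⁻¹ * finRotate n).swapLength :=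
    calc (finRotate n).swapLength
        = (α * (α⁻¹ * β) * (β⁻¹ * finRotate n)).swapLength := by rw [hγ]
      _ ≤ (α * (α⁻¹ * β)).swapLength + (β⁻¹ * finRotate n).swapLength := swapLength_mul_le _ _
      _ ≤ _ := Nat.add_le_add_right (swapLength_mul_le _ _) _
  have := numCycles_add_swapLength α
  have := numCycles_add_swapLength (α⁻¹ * β)
  have := numCycles_add_swapLength (β⁻¹ * finRotate n)
  have := numCycles_add_swapLength (finRotate n)
  have := numCycles_finRotate_le_one n
  omega

/-- For every `n ≥ 1` and permutations `α, β ∈ S_n`,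
`#α + #(α⁻¹β) + #(β⁻¹γ) ≤ 2n + 1`, where `γ = (1, 2, …, n)` is the full cycle
(realized as `finRotate n`). -/
theorem numCycles_triple_le (n : ℕ) (hn : 1 ≤ n) (α β : Equiv.Perm (Fin n)) :
    numCycles α + numCycles (α⁻¹ * β) + numCycles (β⁻¹ * finRotate n) ≤ 2 * n + 1 :=
  numCycles_triple_le_general n α β
end

section
/- For each N ∈ ℕ there exists a measurable map ψ from the space of N×N complex matrices to itself such that for every matrix M, ψ(M) is unitary and ψ(M)* M ψ(M) is upper triangular. -/
/-!
Pointwise, Schur triangularization holds by induction on the dimension: if `v` is an eigenvector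
of `T†`, then `vᗮ` is `T`-invariant, so an upper-triangular orthonormal basis of `vᗮ` followed by
`v / ‖v‖` is one for `T`. The pairs `(M, U)` with `U` unitary and `Uᴴ M U` upper triangular form a
closed set whose fibres lie in the compact unitary group, so measurability comes from a Borel
selection theorem for closed relations with values in a compact metrizable space. The selection is
the limit of centres of nested balls of radius `2⁻ⁿ`, each centre being the first point of a dense
sequence that comes within `2⁻ⁿ` of the current fibre; its index depends measurably on `M` because
projecting along a compact factor maps closed sets to closed sets.
-/

open MeasureTheory Matrix

noncomputable instance matrixMeasurableSpace (N : ℕ) :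
    MeasurableSpace (Matrix (Fin N) (Fin N) ℂ) :=
  inferInstanceAs (MeasurableSpace (Fin N → Fin N → ℂ))

open Module
open scoped InnerProductSpace

section Schur

variable {𝕜 E : Type*} [RCLike 𝕜] [NormedAddCommGroup E] [InnerProductSpace 𝕜 E]

theorem Orthonormal.snoc {n : ℕ} {v : Fin n → E} (hv : Orthonormal 𝕜 v) {u : E} (hu : ‖u‖ = 1)
    (hvu : ∀ i, ⟪v i, u⟫_𝕜 = 0) : Orthonormal 𝕜 (Fin.snoc v u : Fin (n + 1) → E) := by
  refine ⟨fun i => ?_, fun i j hij => ?_⟩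
  · induction i using Fin.lastCases <;> simp [hu, hv.norm_eq_one]
  · induction i using Fin.lastCases <;> induction j using Fin.lastCases
    · exact absurd rfl hij
    · simpa using inner_eq_zero_symm.mp (hvu _)
    · simp [hvu]
    · simpa using hv.inner_eq_zero fun h => hij (congrArg _ h)

theorem LinearMap.apply_mem_orthogonal_span_singleton [FiniteDimensional 𝕜 E] {T : E →ₗ[𝕜] E}
    {μ : 𝕜} {v : E} (hv : T.adjoint v = μ • v) {w : E} (hw : w ∈ (𝕜 ∙ v)ᗮ) :
    T w ∈ (𝕜 ∙ v)ᗮ := by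
  rw [Submodule.mem_orthogonal_singleton_iff_inner_right] at hw ⊢
  rw [← LinearMap.adjoint_inner_left, hv, inner_smul_left, hw, mul_zero]

theorem LinearMap.exists_orthonormalBasis_inner_apply_eq_zero_of_lt [IsAlgClosed 𝕜]
    [FiniteDimensional 𝕜 E] {n : ℕ} (hn : finrank 𝕜 E = n) (T : E →ₗ[𝕜] E) :
    ∃ b : OrthonormalBasis (Fin n) 𝕜 E, ∀ i j, j < i → ⟪b i, T (b j)⟫_𝕜 = 0 := by
  induction n generalizing E with
  | zero => exact ⟨(stdOrthonormalBasis 𝕜 E).reindex (finCongr hn), fun i => i.elim0⟩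
  | succ n ih =>
    have : Nontrivial E := nontrivial_of_finrank_eq_succ hn
    have : Fact (finrank 𝕜 E = n + 1) := ⟨hn⟩
    obtain ⟨μ, hμ⟩ := Module.End.exists_eigenvalue T.adjoint
    obtain ⟨v, hv⟩ := hμ.exists_hasEigenvector
    set W := (𝕜 ∙ v)ᗮ
    have hW : ∀ w ∈ W, T w ∈ W := fun w => T.apply_mem_orthogonal_span_singleton hv.apply_eq_smul
    obtain ⟨c, hc⟩ := ih (Submodule.finrank_orthogonal_span_singleton hv.2) (T.restrict hW)
    set u : E := ((‖v‖ : 𝕜)⁻¹) • v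
    have hu : u ∈ 𝕜 ∙ v := Submodule.smul_mem _ _ (Submodule.mem_span_singleton_self v)
    have hon : Orthonormal 𝕜 (Fin.snoc (fun i => (c i : E)) u : Fin (n + 1) → E) :=
      (c.orthonormal.comp_linearIsometry W.subtypeₗᵢ).snoc (norm_smul_inv_norm hv.2)
        fun i => Submodule.inner_left_of_mem_orthogonal hu (c i).2
    let b := (basisOfOrthonormalOfCardEqFinrank hon (by simp [hn])).toOrthonormalBasis
      (by simpa using hon)
    refine ⟨b, fun i j hij => ?_⟩
    simp only [b, Basis.coe_toOrthonormalBasis, coe_basisOfOrthonormalOfCardEqFinrank]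
    induction j using Fin.lastCases with
    | last => exact absurd hij (not_lt.2 (Fin.le_last i))
    | cast j =>
      induction i using Fin.lastCases with
      | last => simpa using Submodule.inner_right_of_mem_orthogonal hu (hW _ (c j).2)
      | cast i => simpa using hc i j (by simpa using hij)

theorem OrthonormalBasis.conjTranspose_toMatrix {ι ι' : Type*} [Fintype ι] [Fintype ι']
    (a : OrthonormalBasis ι 𝕜 E) (b : OrthonormalBasis ι' 𝕜 E) :
    (a.toBasis.toMatrix b)ᴴ = b.toBasis.toMatrix a := by
  ext i j
  simp [Basis.toMatrix_apply, OrthonormalBasis.repr_apply_apply]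

theorem OrthonormalBasis.toMatrix_linearMap_apply {ι : Type*} [Fintype ι] [DecidableEq ι]
    (b : OrthonormalBasis ι 𝕜 E) (T : E →ₗ[𝕜] E) (i j : ι) :
    LinearMap.toMatrix b.toBasis b.toBasis T i j = ⟪b i, T (b j)⟫_𝕜 := by
  simp [LinearMap.toMatrix_apply, OrthonormalBasis.repr_apply_apply]

theorem Matrix.exists_mem_unitaryGroup_blockTriangular_conj [IsAlgClosed 𝕜] {n : ℕ}
    (M : Matrix (Fin n) (Fin n) 𝕜) :
    ∃ U ∈ unitaryGroup (Fin n) 𝕜, (Uᴴ * M * U).BlockTriangular id := by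
  obtain ⟨b, hb⟩ := (toEuclideanLin M).exists_orthonormalBasis_inner_apply_eq_zero_of_lt
    (finrank_euclideanSpace_fin (𝕜 := 𝕜))
  let a := EuclideanSpace.basisFun (Fin n) 𝕜
  have hconj : (a.toBasis.toMatrix b)ᴴ * M * a.toBasis.toMatrix b =
      LinearMap.toMatrix b.toBasis b.toBasis (toEuclideanLin M) := by
    rw [a.conjTranspose_toMatrix, ← basis_toMatrix_mul_linearMap_toMatrix_mul_basis_toMatrix
      (b' := a.toBasis) (c' := a.toBasis), toEuclideanLin_eq_toLin_orthonormal,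
      LinearMap.toMatrix_toLin]
    rfl
  refine ⟨_, a.toMatrix_orthonormalBasis_mem_unitary b, fun i j hij => ?_⟩
  rw [hconj, b.toMatrix_linearMap_apply]
  exact hb i j hij

end Schur

open Filter Topology Metric TopologicalSpace

namespace NestedBalls

variable {Y : Type*} [MetricSpace Y] (e : ℕ → Y)

noncomputable def firstIndex (S : Set Y) (r : ℝ) : ℕ :=
  sInf {k | (S ∩ closedBall (e k) r).Nonempty}

noncomputable def sets (S : Set Y) : ℕ → Set Y
  | 0 => S
  | n + 1 => sets S n ∩ closedBall (e (firstIndex e (sets S n) ((2 : ℝ)⁻¹ ^ n))) ((2 : ℝ)⁻¹ ^ n)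

noncomputable def center (S : Set Y) (n : ℕ) : Y :=
  e (firstIndex e (sets e S n) ((2 : ℝ)⁻¹ ^ n))

variable {e}

theorem exists_inter_closedBall_nonempty (he : DenseRange e) {S : Set Y} (hS : S.Nonempty)
    {r : ℝ} (hr : 0 < r) : ∃ k, (S ∩ closedBall (e k) r).Nonempty := by
  obtain ⟨y, hy⟩ := hS
  obtain ⟨k, hk⟩ := Metric.denseRange_iff.mp he y r hr
  exact ⟨k, y, hy, mem_closedBall.mpr hk.le⟩

theorem firstIndex_eq_iff {S : Set Y} {r : ℝ} (h : ∃ k, (S ∩ closedBall (e k) r).Nonempty)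
    (k : ℕ) : firstIndex e S r = k ↔
      (S ∩ closedBall (e k) r).Nonempty ∧ ∀ j < k, ¬(S ∩ closedBall (e j) r).Nonempty := by
  rw [firstIndex, csInf_eq_iff (s := {k | (S ∩ closedBall (e k) r).Nonempty}) h]
  exact and_congr_right fun _ => ⟨fun hle j hj hs => (hle j hs).not_gt hj,
    fun hlt j hs => not_lt.mp fun hj => hlt j hj hs⟩

theorem sets_succ (S : Set Y) (n : ℕ) :
    sets e S (n + 1) = sets e S n ∩ closedBall (center e S n) ((2 : ℝ)⁻¹ ^ n) := rfl

theorem sets_nonempty (he : DenseRange e) {S : Set Y} (hS : S.Nonempty) :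
    ∀ n, (sets e S n).Nonempty
  | 0 => hS
  | n + 1 => Nat.sInf_mem <| exists_inter_closedBall_nonempty he (sets_nonempty he hS n)
      (by positivity : (0 : ℝ) < 2⁻¹ ^ n)

theorem sets_subset (S : Set Y) : ∀ n, sets e S n ⊆ S
  | 0 => subset_rfl
  | n + 1 => Set.inter_subset_left.trans (sets_subset S n)

theorem dist_center_succ_le (he : DenseRange e) {S : Set Y} (hS : S.Nonempty) (n : ℕ) :
    dist (center e S n) (center e S (n + 1)) ≤ 2 * (2 : ℝ)⁻¹ ^ n := by
  obtain ⟨y, ⟨⟨-, hyn⟩, hyn'⟩⟩ := sets_nonempty he hS (n + 2)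
  calc dist (center e S n) (center e S (n + 1))
      ≤ dist y (center e S n) + dist y (center e S (n + 1)) := dist_triangle_left _ _ _
    _ ≤ (2 : ℝ)⁻¹ ^ n + (2 : ℝ)⁻¹ ^ (n + 1) :=
      add_le_add (mem_closedBall.mp hyn) (mem_closedBall.mp hyn')
    _ ≤ 2 * (2 : ℝ)⁻¹ ^ n := by
      rw [pow_succ]
      linarith [pow_pos (by norm_num : (0 : ℝ) < 2⁻¹) n]

theorem tendsto_center [Nonempty Y] [CompleteSpace Y] (he : DenseRange e) {S : Set Y}
    (hS : S.Nonempty) : Tendsto (center e S) atTop (𝓝 (limUnder atTop (center e S))) :=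
  (cauchySeq_of_le_geometric _ _ (by norm_num) (dist_center_succ_le he hS)).tendsto_limUnder

theorem limUnder_center_mem [Nonempty Y] [CompleteSpace Y] (he : DenseRange e) {S : Set Y}
    (hS : S.Nonempty) (hSc : IsClosed S) : limUnder atTop (center e S) ∈ S := by
  choose y hy using fun n => sets_nonempty he hS (n + 1)
  have hdist : ∀ n, dist (y n) (center e S n) ≤ (2 : ℝ)⁻¹ ^ n := fun n =>
    mem_closedBall.mp (hy n).2
  have hy_tendsto : Tendsto y atTop (𝓝 (limUnder atTop (center e S))) :=
    (tendsto_center he hS).congr_dist <| squeeze_zero (fun _ => dist_nonneg)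
      (fun n => (dist_comm _ _).trans_le (hdist n))
      (tendsto_pow_atTop_nhds_zero_of_lt_one (by norm_num) (by norm_num))
  exact hSc.mem_of_tendsto hy_tendsto (Eventually.of_forall fun n => sets_subset S _ (hy n))

variable {X : Type*} [MeasurableSpace X]

theorem measurable_firstIndex {S : X → Set Y} {r : ℝ}
    (hS : ∀ C, IsClosed C → MeasurableSet {x | (S x ∩ C).Nonempty})
    (hne : ∀ x, ∃ k, (S x ∩ closedBall (e k) r).Nonempty) :
    Measurable fun x => firstIndex e (S x) r := by
  refine measurable_to_countable' fun k => ?_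
  have : (fun x => firstIndex e (S x) r) ⁻¹' {k} = {x | (S x ∩ closedBall (e k) r).Nonempty} ∩
      ⋂ j < k, {x | (S x ∩ closedBall (e j) r).Nonempty}ᶜ := by
    ext x
    simp [firstIndex_eq_iff (hne x)]
  rw [this]
  exact (hS _ isClosed_closedBall).inter <| .biInter (Set.to_countable _) fun j _ =>
    (hS _ isClosed_closedBall).compl

theorem measurableSet_sets_inter_nonempty (he : DenseRange e) {S : X → Set Y}
    (hne : ∀ x, (S x).Nonempty)
    (hS : ∀ C, IsClosed C → MeasurableSet {x | (S x ∩ C).Nonempty}) :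
    ∀ n C, IsClosed C → MeasurableSet {x | (sets e (S x) n ∩ C).Nonempty}
  | 0 => hS
  | n + 1 => fun C hC => by
    have hn := measurableSet_sets_inter_nonempty he hne hS n
    have hidx := measurable_firstIndex hn fun x =>
      exists_inter_closedBall_nonempty he (sets_nonempty he (hne x) n)
        (by positivity : (0 : ℝ) < 2⁻¹ ^ n)
    have : {x | (sets e (S x) (n + 1) ∩ C).Nonempty} = ⋃ k,
        (fun x => firstIndex e (sets e (S x) n) ((2 : ℝ)⁻¹ ^ n)) ⁻¹' {k} ∩
          {x | (sets e (S x) n ∩ (closedBall (e k) ((2 : ℝ)⁻¹ ^ n) ∩ C)).Nonempty} := by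
      ext x
      simp [sets_succ, center, Set.inter_assoc]
    rw [this]
    exact .iUnion fun k =>
      (hidx (measurableSet_singleton k)).inter (hn _ (isClosed_closedBall.inter hC))

theorem measurable_center [MeasurableSpace Y] (he : DenseRange e) {S : X → Set Y}
    (hne : ∀ x, (S x).Nonempty)
    (hS : ∀ C, IsClosed C → MeasurableSet {x | (S x ∩ C).Nonempty}) (n : ℕ) :
    Measurable fun x => center e (S x) n :=
  measurable_from_nat.comp <| measurable_firstIndex (measurableSet_sets_inter_nonempty he hne hS n)
    fun x => exists_inter_closedBall_nonempty he (sets_nonempty he (hne x) n)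
      (by positivity : (0 : ℝ) < 2⁻¹ ^ n)

end NestedBalls

theorem exists_measurable_selection_of_isClosed {X Y : Type*} [TopologicalSpace X]
    [MeasurableSpace X] [OpensMeasurableSpace X] [TopologicalSpace Y] [CompactSpace Y]
    [MetrizableSpace Y] [MeasurableSpace Y] [BorelSpace Y] {R : Set (X × Y)} (hR : IsClosed R)
    (hne : ∀ x, ∃ y, (x, y) ∈ R) : ∃ f : X → Y, Measurable f ∧ ∀ x, (x, f x) ∈ R := by
  rcases isEmpty_or_nonempty Y with hY | hY
  · have : IsEmpty X := ⟨fun x => (hne x).elim fun y _ => isEmptyElim y⟩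
    exact ⟨isEmptyElim, measurable_of_empty _, isEmptyElim⟩
  let := metrizableSpaceMetric Y
  have he := denseRange_denseSeq Y
  let S : X → Set Y := fun x => {y | (x, y) ∈ R}
  have hSc : ∀ x, IsClosed (S x) := fun x => hR.preimage (Continuous.prodMk_right x)
  have hS : ∀ C, IsClosed C → MeasurableSet {x | (S x ∩ C).Nonempty} := by
    intro C hC
    have : {x | (S x ∩ C).Nonempty} = Prod.fst '' (R ∩ Set.univ ×ˢ C) := by
      ext x; simp [S, Set.Nonempty]
    rw [this]
    exact (isClosedMap_fst_of_compactSpace _ (hR.inter (isClosed_univ.prod hC))).measurableSet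
  refine ⟨fun x => limUnder atTop (NestedBalls.center (denseSeq Y) (S x)), ?_, fun x =>
    NestedBalls.limUnder_center_mem he (hne x) (hSc x)⟩
  exact measurable_of_tendsto_metrizable (NestedBalls.measurable_center he hne hS)
    (tendsto_pi_nhds.mpr fun x => NestedBalls.tendsto_center he (hne x))

theorem Matrix.isCompact_unitaryGroup {n 𝕜 : Type*} [Fintype n] [DecidableEq n] [RCLike 𝕜] :
    IsCompact (unitaryGroup n 𝕜 : Set (Matrix n n 𝕜)) := by
  have hK : IsCompact (Set.univ.pi fun _ : n => Set.univ.pi fun _ : n => closedBall (0 : 𝕜) 1) :=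
    isCompact_univ_pi fun _ => isCompact_univ_pi fun _ => isCompact_closedBall 0 1
  exact hK.of_isClosed_subset (isClosed_unitary (R := Matrix n n 𝕜)) fun U hU =>
    Set.mem_univ_pi.2 fun i => Set.mem_univ_pi.2 fun j =>
      mem_closedBall_zero_iff.2 (entry_norm_bound_of_unitary hU i j)

instance Matrix.metrizableSpace {m n R : Type*} [Finite m] [Finite n] [TopologicalSpace R]
    [MetrizableSpace R] : MetrizableSpace (Matrix m n R) :=
  inferInstanceAs (MetrizableSpace (m → n → R))

instance matrixBorelSpace (N : ℕ) : BorelSpace (Matrix (Fin N) (Fin N) ℂ) :=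
  inferInstanceAs (BorelSpace (Fin N → Fin N → ℂ))

theorem Matrix.isClosed_setOf_blockTriangular {m R α : Type*} [TopologicalSpace R] [T1Space R]
    [Zero R] [LT α] (b : m → α) : IsClosed {M : Matrix m m R | M.BlockTriangular b} := by
  simp only [BlockTriangular, Set.ofPred_forall]
  exact isClosed_iInter fun i => isClosed_iInter fun j => isClosed_iInter fun _ =>
    isClosed_singleton.preimage (continuous_id.matrix_elem i j)

/-- For each `N` there is a Borel-measurable map `ψ` on `N × N` complex matrices
such that `ψ(M)` is always unitary and `ψ(M)* M ψ(M)` is upper triangular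
(a measurable Schur triangularization). -/
theorem exists_measurable_schur_triangularization (N : ℕ) :
    ∃ ψ : Matrix (Fin N) (Fin N) ℂ → Matrix (Fin N) (Fin N) ℂ,
      Measurable ψ ∧
      ∀ M : Matrix (Fin N) (Fin N) ℂ,
        ψ M ∈ Matrix.unitaryGroup (Fin N) ℂ ∧
        ((ψ M)ᴴ * M * ψ M).BlockTriangular id := by
  let 𝕌 : Set (Matrix (Fin N) (Fin N) ℂ) := unitaryGroup (Fin N) ℂ
  have : CompactSpace 𝕌 := isCompact_iff_compactSpace.mp isCompact_unitaryGroup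
  let R : Set (Matrix (Fin N) (Fin N) ℂ × 𝕌) :=
    {p | ((p.2 : Matrix (Fin N) (Fin N) ℂ)ᴴ * p.1 * p.2).BlockTriangular id}
  have hR : IsClosed R := (isClosed_setOf_blockTriangular id).preimage (by fun_prop)
  obtain ⟨f, hf, hfR⟩ := exists_measurable_selection_of_isClosed hR fun M =>
    let ⟨U, hU, hT⟩ := M.exists_mem_unitaryGroup_blockTriangular_conj
    ⟨⟨U, hU⟩, hT⟩
  exact ⟨fun M => f M, measurable_subtype_coe.comp hf, fun M => ⟨(f M).2, hfR M⟩⟩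
end

section
/- For a Hermitian N×N complex matrix Y and any n ≥ 1, Σ_{i,j=1}^N |Y(i,j)|^{2n} ≤ Tr(Y^{2n}). -/
/-!
Row by row, `∑ⱼ |Y i j|^(2n) ≤ (∑ⱼ |Y i j|²)ⁿ = ((Y²) i i)ⁿ`. Diagonalizing the positive
semidefinite matrix `A = Y²` as `U D Uᴴ`, the diagonal entry `(Aᵐ) i i` is the average of the
`m`-th powers of the eigenvalues with weights `|U i k|²`, which sum to one; so Jensen's inequality
for `x ↦ xⁿ` gives `(A i i)ⁿ ≤ (Aⁿ) i i`. Summing over `i` yields the trace of `Y^(2n)`.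
-/

open Matrix Finset
open scoped ComplexOrder

theorem Finset.sum_pow_le_pow_sum {ι R : Type*} [Semiring R] [PartialOrder R]
    [IsOrderedRing R] {s : Finset ι} {f : ι → R} (hf : ∀ i ∈ s, 0 ≤ f i) {n : ℕ} (hn : n ≠ 0) :
    ∑ i ∈ s, f i ^ n ≤ (∑ i ∈ s, f i) ^ n := by
  classical
  induction s using Finset.induction_on with
  | empty => simp [zero_pow hn]
  | insert a s ha ih =>
    rw [sum_insert ha, sum_insert ha]
    have hs : ∀ i ∈ s, 0 ≤ f i := fun i hi => hf i (mem_insert_of_mem hi)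
    calc f a ^ n + ∑ i ∈ s, f i ^ n ≤ f a ^ n + (∑ i ∈ s, f i) ^ n := by gcongr; exact ih hs
      _ ≤ (f a + ∑ i ∈ s, f i) ^ n :=
        pow_add_pow_le (hf a (mem_insert_self a s)) (sum_nonneg hs) hn

namespace Matrix

variable {𝕜 ι κ : Type*} [RCLike 𝕜]

theorem mul_conjTranspose_apply_self [Fintype κ] (A : Matrix ι κ 𝕜) (i : ι) :
    (A * Aᴴ) i i = ((∑ j, ‖A i j‖ ^ 2 : ℝ) : 𝕜) := by
  simp [mul_apply, conjTranspose_apply, RCLike.mul_conj]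

variable [Fintype ι] [DecidableEq ι]

theorem sum_norm_sq_apply_eq_one_of_mem_unitaryGroup {U : Matrix ι ι 𝕜}
    (hU : U ∈ unitaryGroup ι 𝕜) (i : ι) : ∑ j, ‖U i j‖ ^ 2 = 1 := by
  have h : (U * Uᴴ) i i = (1 : Matrix ι ι 𝕜) i i := by
    rw [← star_eq_conjTranspose, Unitary.mul_star_self_of_mem hU]
  rw [mul_conjTranspose_apply_self, one_apply_eq] at h
  exact_mod_cast h

theorem IsHermitian.pow_apply_self {A : Matrix ι ι 𝕜} (hA : A.IsHermitian) (m : ℕ) (i : ι) :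
    (A ^ m) i i = ((∑ k, ‖(hA.eigenvectorUnitary : Matrix ι ι 𝕜) i k‖ ^ 2 *
      hA.eigenvalues k ^ m : ℝ) : 𝕜) := by
  conv_lhs => rw [hA.spectral_theorem, ← map_pow, Unitary.conjStarAlgAut_apply, diagonal_pow]
  rw [mul_apply]
  push_cast
  refine sum_congr rfl fun k _ => ?_
  rw [mul_diagonal, star_apply, mul_right_comm, RCLike.star_def, RCLike.mul_conj]
  simp

theorem PosSemidef.re_apply_self_pow_le {A : Matrix ι ι 𝕜} (hA : A.PosSemidef) (n : ℕ) (i : ι) :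
    RCLike.re (A i i) ^ n ≤ RCLike.re ((A ^ n) i i) := by
  set U : Matrix ι ι 𝕜 := (hA.isHermitian.eigenvectorUnitary : Matrix ι ι 𝕜)
  have jensen := Real.pow_arith_mean_le_arith_mean_pow univ (fun k => ‖U i k‖ ^ 2)
    hA.isHermitian.eigenvalues (fun k _ => by positivity)
    (sum_norm_sq_apply_eq_one_of_mem_unitaryGroup hA.isHermitian.eigenvectorUnitary.2 i)
    (fun k _ => hA.eigenvalues_nonneg k) n
  conv_lhs => rw [← pow_one A]
  rw [hA.isHermitian.pow_apply_self, hA.isHermitian.pow_apply_self, RCLike.ofReal_re,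
    RCLike.ofReal_re]
  simpa only [pow_one] using jensen

end Matrix

/-- For a Hermitian `N × N` complex matrix `Y` and any `n ≥ 1`,
`∑_{i,j} |Y(i,j)|^{2n} ≤ Tr(Y^{2n})`. -/
theorem sum_abs_pow_le_trace_pow (N : ℕ) (Y : Matrix (Fin N) (Fin N) ℂ)
    (hY : Y.IsHermitian) (n : ℕ) (hn : 1 ≤ n) :
    ∑ i : Fin N, ∑ j : Fin N, ‖Y i j‖ ^ (2 * n)
      ≤ (Y ^ (2 * n)).trace.re := by
  have hY2 : (Y ^ 2).PosSemidef := by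
    simpa only [hY.eq, sq] using posSemidef_self_mul_conjTranspose Y
  have hrow (i : Fin N) : ∑ j, ‖Y i j‖ ^ 2 = ((Y ^ 2) i i).re := by
    have h := mul_conjTranspose_apply_self Y i
    rw [hY.eq, ← sq] at h
    rw [h]
    exact (RCLike.ofReal_re (K := ℂ) _).symm
  calc ∑ i, ∑ j, ‖Y i j‖ ^ (2 * n) = ∑ i, ∑ j, (‖Y i j‖ ^ 2) ^ n := by simp only [pow_mul]
    _ ≤ ∑ i, (∑ j, ‖Y i j‖ ^ 2) ^ n :=
      sum_le_sum fun i _ => sum_pow_le_pow_sum (fun j _ => by positivity) (by omega)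
    _ = ∑ i, ((Y ^ 2) i i).re ^ n := by simp only [hrow]
    _ ≤ ∑ i, ((Y ^ (2 * n)) i i).re :=
      sum_le_sum fun i _ => by simpa [pow_mul] using hY2.re_apply_self_pow_le n i
    _ = (Y ^ (2 * n)).trace.re := by rw [trace, Complex.re_sum]; rfl
end
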